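/- (Corollary 3.3: isometric image of an osculating curve.) Let σ(s) = Φ(u(s),v(s)) be osculating, i.e. σ = ξσ' + (μ/κ)σ'' for smooth ξ, μ. Let A : ℝ² → L(ℝ³,ℝ³) be a smooth family of linear maps and let Φ̃ : ℝ² → ℝ³ be smooth with Φ̃_u = A(Φ_u) and Φ̃_v = A(Φ_v) pointwise. Define σ̃(s) = A(σ(s)) + (μ/κ)[u'²(∂_u A)(Φ_u) + 2u'v'(∂_u A)(Φ_v) + v'²(∂_v A)(Φ_v)], all quantities on ℝ² evaluated at (u(s),v(s)). Then σ̃(s) = ξ(Φ̃_u u' + Φ̃_v v') + (μ/κ)(Φ̃_u u'' + Φ̃_v v'' + Φ̃_uu u'² + 2Φ̃_uv u'v' + Φ̃_vv v'²), so σ̃ is an osculating curve on the patch Φ̃. -/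

import Mathlib

noncomputable section
open Matrix

/-- Partial derivative in the first (`u`) direction. -/
def pu {E : Type*} [NormedAddCommGroup E] [NormedSpace ℝ E] (f : ℝ × ℝ → E) (p : ℝ × ℝ) : E :=
  fderiv ℝ f p (1, 0)

/-- Partial derivative in the second (`v`) direction. -/
def pv {E : Type*} [NormedAddCommGroup E] [NormedSpace ℝ E] (f : ℝ × ℝ → E) (p : ℝ × ℝ) : E :=
  fderiv ℝ f p (0, 1)

/-- Euclidean norm on `Fin 3 → ℝ`. -/
def enorm3 (x : Fin 3 → ℝ) : ℝ := Real.sqrt (x ⬝ᵥ x)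

section Helpers

variable {E F : Type*} [NormedAddCommGroup E] [NormedSpace ℝ E]
  [NormedAddCommGroup F] [NormedSpace ℝ F]

lemma contDiff_pu {f : ℝ × ℝ → E} (hf : ContDiff ℝ (⊤ : ℕ∞) f) : ContDiff ℝ (⊤ : ℕ∞) (pu f) :=
  (hf.fderiv_right (m := (⊤ : ℕ∞)) (by simp)).clm_apply contDiff_const

lemma contDiff_pv {f : ℝ × ℝ → E} (hf : ContDiff ℝ (⊤ : ℕ∞) f) : ContDiff ℝ (⊤ : ℕ∞) (pv f) :=
  (hf.fderiv_right (m := (⊤ : ℕ∞)) (by simp)).clm_apply contDiff_const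

lemma deriv_comp_uv {f : ℝ × ℝ → E} (hf : ContDiff ℝ (⊤ : ℕ∞) f)
    {u v : ℝ → ℝ} (hu : ContDiff ℝ (⊤ : ℕ∞) u) (hv : ContDiff ℝ (⊤ : ℕ∞) v) (s : ℝ) :
    deriv (fun t => f (u t, v t)) s
      = deriv u s • pu f (u s, v s) + deriv v s • pv f (u s, v s) := by
  have hγ : HasDerivAt (fun t => (u t, v t)) (deriv u s, deriv v s) s :=
    ((hu.differentiable (by simp) s).hasDerivAt).prodMk
      ((hv.differentiable (by simp) s).hasDerivAt)
  have hfd : HasFDerivAt f (fderiv ℝ f (u s, v s)) (u s, v s) :=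
    (hf.differentiable (by simp) _).hasFDerivAt
  have h := (hfd.comp_hasDerivAt s hγ).deriv
  simp only [Function.comp_def] at h
  rw [h]
  have h2 : (deriv u s, deriv v s)
      = deriv u s • ((1:ℝ), (0:ℝ)) + deriv v s • ((0:ℝ), (1:ℝ)) := by
    simp [Prod.ext_iff]
  rw [h2, map_add, _root_.map_smul, _root_.map_smul]
  rfl

lemma pu_clm_apply {A : ℝ × ℝ → (E →L[ℝ] F)} {g : ℝ × ℝ → E}
    (hA : ContDiff ℝ (⊤ : ℕ∞) A) (hg : ContDiff ℝ (⊤ : ℕ∞) g) (p : ℝ × ℝ) :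
    pu (fun q => A q (g q)) p = (pu A p) (g p) + A p (pu g p) := by
  have := fderiv_clm_apply (𝕜 := ℝ) (c := A) (u := g) (x := p)
    (hA.differentiable (by simp) p) (hg.differentiable (by simp) p)
  simp only [pu, this]
  simp [add_comm]

lemma pv_clm_apply {A : ℝ × ℝ → (E →L[ℝ] F)} {g : ℝ × ℝ → E}
    (hA : ContDiff ℝ (⊤ : ℕ∞) A) (hg : ContDiff ℝ (⊤ : ℕ∞) g) (p : ℝ × ℝ) :
    pv (fun q => A q (g q)) p = (pv A p) (g p) + A p (pv g p) := by
  have := fderiv_clm_apply (𝕜 := ℝ) (c := A) (u := g) (x := p)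
    (hA.differentiable (by simp) p) (hg.differentiable (by simp) p)
  simp only [pv, this]
  simp [add_comm]

lemma pu_pv_symm {f : ℝ × ℝ → E} (hf : ContDiff ℝ (⊤ : ℕ∞) f) (p : ℝ × ℝ) :
    pu (pv f) p = pv (pu f) p := by
  have hdf : ∀ y, HasFDerivAt f (fderiv ℝ f y) y :=
    fun y => (hf.differentiable (by simp) y).hasFDerivAt
  have h2 : HasFDerivAt (fderiv ℝ f) (fderiv ℝ (fderiv ℝ f) p) p :=
    ((hf.fderiv_right (m := (⊤ : ℕ∞)) (by simp)).differentiable (by simp) p).hasFDerivAt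
  have hsymm := second_derivative_symmetric hdf h2 ((1:ℝ), (0:ℝ)) ((0:ℝ), (1:ℝ))
  have e1 : pu (pv f) p = fderiv ℝ (fderiv ℝ f) p (1, 0) (0, 1) := by
    have := pu_clm_apply (A := fderiv ℝ f) (g := fun _ : ℝ × ℝ => ((0:ℝ), (1:ℝ)))
      (hf.fderiv_right (m := (⊤ : ℕ∞)) (by simp)) contDiff_const p
    rw [show pv f = fun q => fderiv ℝ f q (0, 1) from rfl]
    simpa [pv, pu] using this
  have e2 : pv (pu f) p = fderiv ℝ (fderiv ℝ f) p (0, 1) (1, 0) := by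
    have := pv_clm_apply (A := fderiv ℝ f) (g := fun _ : ℝ × ℝ => ((1:ℝ), (0:ℝ)))
      (hf.fderiv_right (m := (⊤ : ℕ∞)) (by simp)) contDiff_const p
    rw [show pu f = fun q => fderiv ℝ f q (1, 0) from rfl]
    simpa [pv, pu] using this
  rw [e1, e2, hsymm]

end Helpers

theorem isometric_image_of_osculating_curve
    (Φ : ℝ × ℝ → Fin 3 → ℝ) (hΦ : ContDiff ℝ (⊤ : ℕ∞) Φ)
    (hreg : ∀ p, crossProduct (pu Φ p) (pv Φ p) ≠ 0)
    (u v : ℝ → ℝ) (hu : ContDiff ℝ (⊤ : ℕ∞) u) (hv : ContDiff ℝ (⊤ : ℕ∞) v)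
    (σ : ℝ → Fin 3 → ℝ) (hσ : ∀ s, σ s = Φ (u s, v s))
    (hunit : ∀ s, enorm3 (deriv σ s) = 1)
    (κ : ℝ → ℝ) (hκ : ∀ s, κ s = enorm3 (deriv (deriv σ) s)) (hκ0 : ∀ s, κ s ≠ 0)
    (ξ μ : ℝ → ℝ) (hξ : ContDiff ℝ (⊤ : ℕ∞) ξ) (hμ : ContDiff ℝ (⊤ : ℕ∞) μ)
    (hosc : ∀ s, σ s = ξ s • deriv σ s + (μ s / κ s) • deriv (deriv σ) s)
    (A : ℝ × ℝ → ((Fin 3 → ℝ) →L[ℝ] (Fin 3 → ℝ))) (hA : ContDiff ℝ (⊤ : ℕ∞) A)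
    (Φt : ℝ × ℝ → Fin 3 → ℝ) (hΦt : ContDiff ℝ (⊤ : ℕ∞) Φt)
    (hΦtu : ∀ p, pu Φt p = A p (pu Φ p))
    (hΦtv : ∀ p, pv Φt p = A p (pv Φ p))
    (σt : ℝ → Fin 3 → ℝ)
    (hσt : ∀ s, σt s =
      A (u s, v s) (σ s) +
      (μ s / κ s) •
        ((deriv u s) ^ 2 • (pu A (u s, v s)) (pu Φ (u s, v s)) +
         (2 * deriv u s * deriv v s) • (pu A (u s, v s)) (pv Φ (u s, v s)) +
         (deriv v s) ^ 2 • (pv A (u s, v s)) (pv Φ (u s, v s)))) :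
    ∀ s, σt s = ξ s • (deriv u s • pu Φt (u s, v s) + deriv v s • pv Φt (u s, v s)) +
      (μ s / κ s) •
        (deriv (deriv u) s • pu Φt (u s, v s) + deriv (deriv v) s • pv Φt (u s, v s) +
         (deriv u s) ^ 2 • pu (pu Φt) (u s, v s) +
         (2 * deriv u s * deriv v s) • pv (pu Φt) (u s, v s) +
         (deriv v s) ^ 2 • pv (pv Φt) (u s, v s)) := by
  intro s
  set p : ℝ × ℝ := (u s, v s) with hp
  -- abbreviations
  set u1 := deriv u s
  set v1 := deriv v s
  set u2 := deriv (deriv u) s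
  set v2 := deriv (deriv v) s
  have hu' : Differentiable ℝ (deriv u) :=
    (contDiff_infty_iff_deriv.mp (hu.of_le (by simp))).2.differentiable (by simp)
  have hv' : Differentiable ℝ (deriv v) :=
    (contDiff_infty_iff_deriv.mp (hv.of_le (by simp))).2.differentiable (by simp)
  -- σ = Φ ∘ (u,v)
  have hσfun : σ = fun t => Φ (u t, v t) := funext hσ
  -- first derivative of σ
  have hσ1 : ∀ t, deriv σ t
      = deriv u t • pu Φ (u t, v t) + deriv v t • pv Φ (u t, v t) := by
    intro t
    rw [hσfun]
    exact deriv_comp_uv hΦ hu hv t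
  -- second derivative
  have hσ2 : deriv (deriv σ) s
      = u2 • pu Φ p + v2 • pv Φ p
        + u1 • (u1 • pu (pu Φ) p + v1 • pv (pu Φ) p)
        + v1 • (u1 • pu (pv Φ) p + v1 • pv (pv Φ) p) := by
    have h1 : deriv σ = fun t =>
        deriv u t • pu Φ (u t, v t) + deriv v t • pv Φ (u t, v t) := funext hσ1
    rw [h1]
    have hpuΦ := contDiff_pu hΦ
    have hpvΦ := contDiff_pv hΦ
    have dgu : DifferentiableAt ℝ (fun t => pu Φ (u t, v t)) s :=
      ((hpuΦ.comp ((hu.prodMk hv))).differentiable (by simp) s)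
    have dgv : DifferentiableAt ℝ (fun t => pv Φ (u t, v t)) s :=
      ((hpvΦ.comp ((hu.prodMk hv))).differentiable (by simp) s)
    have du' : DifferentiableAt ℝ (deriv u) s := hu' s
    have dv' : DifferentiableAt ℝ (deriv v) s := hv' s
    rw [deriv_fun_add (f := fun t => deriv u t • pu Φ (u t, v t))
      (g := fun t => deriv v t • pv Φ (u t, v t)) ((du'.smul dgu)) ((dv'.smul dgv)), deriv_fun_smul du' dgu,
      deriv_fun_smul dv' dgv, deriv_comp_uv hpuΦ hu hv s, deriv_comp_uv hpvΦ hu hv s]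
    module
  -- derivatives of Φt
  have hΦtufun : pu Φt = fun q => A q (pu Φ q) := funext hΦtu
  have hΦtvfun : pv Φt = fun q => A q (pv Φ q) := funext hΦtv
  have hpuΦ := contDiff_pu hΦ
  have hpvΦ := contDiff_pv hΦ
  have hPuu : pu (pu Φt) p = (pu A p) (pu Φ p) + A p (pu (pu Φ) p) := by
    rw [hΦtufun]; exact pu_clm_apply hA hpuΦ p
  have hPvu : pv (pu Φt) p = (pv A p) (pu Φ p) + A p (pv (pu Φ) p) := by
    rw [hΦtufun]; exact pv_clm_apply hA hpuΦ p
  have hPuv : pu (pv Φt) p = (pu A p) (pv Φ p) + A p (pu (pv Φ) p) := by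
    rw [hΦtvfun]; exact pu_clm_apply hA hpvΦ p
  have hPvv : pv (pv Φt) p = (pv A p) (pv Φ p) + A p (pv (pv Φ) p) := by
    rw [hΦtvfun]; exact pv_clm_apply hA hpvΦ p
  -- symmetry facts
  have hsymΦ : pu (pv Φ) p = pv (pu Φ) p := pu_pv_symm hΦ p
  have hsymΦt : pu (pv Φt) p = pv (pu Φt) p := pu_pv_symm hΦt p
  have hAsym : (pu A p) (pv Φ p) = (pv A p) (pu Φ p) := by
    have := hsymΦt
    rw [hPuv, hPvu, hsymΦ] at this
    exact add_right_cancel this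
  -- expand A (σ s)
  have hAσ : A p (σ s)
      = ξ s • A p (deriv σ s) + (μ s / κ s) • A p (deriv (deriv σ) s) := by
    rw [hosc s, map_add, _root_.map_smul, _root_.map_smul]
  rw [hσ1 s, hσ2] at hAσ
  simp only [map_add, _root_.map_smul] at hAσ
  rw [hσt s, ← hp, hAσ, hΦtu p, hΦtv p, hPuu, hPvu, hPvv, hsymΦ, hAsym]
  module
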